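/- arXiv:1912.00539 — 2 statements merged into one kernel-verified Lean document; each statement's English description precedes it below -/
import Mathlib

section
/- If the spectral radius of |B| (the maximum modulus of the complex eigenvalues of the entrywise absolute-value matrix |B|) is strictly less than 1, then there exist a vector v ∈ ℝⁿ with v > 0 and a scalar α < 1 such that |B| v ≤ α v componentwise; consequently every chaotic relaxation for (B, c) converges to the unique solution of x = B x + c. -/
open Filter Topology Matrix

/-- A chaotic relaxation for the pair `(B, c)`: a sequence `x` of vectors together with
shift functions `s` and an update function `u` satisfying the Chazan–Miranker conditions. -/
def IsChaoticRelaxation {n : ℕ} (B : Matrix (Fin n) (Fin n) ℝ) (c : Fin n → ℝ)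
    (x : ℕ → Fin n → ℝ) (s : Fin n → ℕ → ℕ) (u : ℕ → Fin n) : Prop :=
  (∀ j : ℕ, 1 ≤ j → ∀ i : Fin n,
      (i ≠ u j → x (j + 1) i = x j i) ∧
      (i = u j → x (j + 1) i = (∑ α : Fin n, B i α * x (j - s α j) α) + c i)) ∧
  (∃ shat : ℕ, ∀ (α : Fin n) (j : ℕ), 1 ≤ j → s α j ≤ min (j - 1) shat) ∧
  (∀ (i : Fin n) (j : ℕ), 1 ≤ j → ∃ l : ℕ, j < l ∧ u l = i)

/-!
Gelfand's formula turns `ρ(|B|) < 1` into convergence of the Neumann series `N = ∑ₖ |B|ᵏ`.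
It is entrywise nonnegative and `N = 1 + |B| N`, so `v = N 1` satisfies `v ≥ 1` and
`|B| v = v - 1 ≤ a v` with `a = 1 - 1 / T` for any `T ≥ max vᵢ`.

In the weighted norm `maxᵢ |eᵢ| / vᵢ` the map `e ↦ B e` is then an `a`-contraction, which
gives uniqueness of the fixed point `x*`. For a chaotic relaxation, a bound `|xʲ - x*| ≤ K v`
valid from time `J` on persists, and once every component has been updated after time `J + ŝ`
(all delayed values then come from times `≥ J`) it improves to `a K v`. Iterating, the error
is eventually below `aᵐ K v` for every `m`.
-/

theorem tendsto_zero_of_forall_eventually_abs_le_pow_mul {f : ℕ → ℝ} {a K : ℝ}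
    (ha0 : 0 ≤ a) (ha1 : a < 1) (h : ∀ m : ℕ, ∀ᶠ j in atTop, |f j| ≤ a ^ m * K) :
    Tendsto f atTop (𝓝 0) := by
  refine Metric.tendsto_nhds.mpr fun ε hε => ?_
  have hpow : Tendsto (fun m : ℕ => a ^ m * K) atTop (𝓝 0) := by
    simpa using (tendsto_pow_atTop_nhds_zero_of_lt_one ha0 ha1).mul_const K
  obtain ⟨m, hm⟩ := (hpow.eventually (gt_mem_nhds hε)).exists
  filter_upwards [h m] with j hj
  rw [Real.dist_eq, sub_zero]
  exact hj.trans_lt hm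

section WeightedMaxNorm

variable {ι : Type*} [Fintype ι] {B : Matrix ι ι ℝ} {v : ι → ℝ} {a : ℝ}

theorem exists_abs_le_mul_of_pos (hv : ∀ i, 0 < v i) (e : ι → ℝ) :
    ∃ K, 0 ≤ K ∧ ∀ i, |e i| ≤ K * v i := by
  refine ⟨∑ j, |e j| / v j, Finset.sum_nonneg fun j _ => by positivity [hv j], fun i => ?_⟩
  rw [← div_le_iff₀ (hv i)]
  exact Finset.single_le_sum (f := fun j => |e j| / v j) (fun j _ => by positivity [hv j])
    (Finset.mem_univ i)

theorem abs_sum_mul_le_of_abs_le (hBv : ∀ i, ∑ j, |B i j| * v j ≤ a * v i) {K : ℝ}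
    (hK : 0 ≤ K) {e : ι → ℝ} (he : ∀ j, |e j| ≤ K * v j) (i : ι) :
    |∑ j, B i j * e j| ≤ a * K * v i :=
  calc |∑ j, B i j * e j| ≤ ∑ j, |B i j| * |e j| := by
        simpa only [abs_mul] using Finset.abs_sum_le_sum_abs (fun j => B i j * e j) Finset.univ
    _ ≤ ∑ j, |B i j| * (K * v j) := by gcongr with j; exact he j
    _ = K * ∑ j, |B i j| * v j := by rw [Finset.mul_sum]; congr! 1 with j; ring
    _ ≤ K * (a * v i) := by gcongr; exact hBv i
    _ = a * K * v i := by ring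

theorem eq_zero_of_eq_mulVec (hv : ∀ i, 0 < v i) (ha0 : 0 ≤ a) (ha1 : a < 1)
    (hBv : ∀ i, ∑ j, |B i j| * v j ≤ a * v i) {d : ι → ℝ} (hd : d = B *ᵥ d) :
    d = 0 := by
  obtain ⟨K, hK, hdK⟩ := exists_abs_le_mul_of_pos hv d
  have hpow (m : ℕ) : ∀ i, |d i| ≤ a ^ m * K * v i := by
    induction m with
    | zero => simpa using hdK
    | succ m ih =>
      intro i
      rw [hd, pow_succ', mul_assoc a]
      exact abs_sum_mul_le_of_abs_le hBv (by positivity) ih i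
  funext i
  refine tendsto_nhds_unique tendsto_const_nhds
    (tendsto_zero_of_forall_eventually_abs_le_pow_mul ha0 ha1 (K := K * v i) fun m => ?_)
  exact Eventually.of_forall fun _ => by simpa [mul_assoc] using hpow m i

end WeightedMaxNorm

theorem Matrix.existsUnique_eq_mulVec_add {ι 𝕜 : Type*} [Fintype ι] [Field 𝕜]
    {B : Matrix ι ι 𝕜} (h : ∀ d, d = B *ᵥ d → d = 0) (c : ι → 𝕜) :
    ∃! x, x = B *ᵥ x + c := by
  set f : (ι → 𝕜) →ₗ[𝕜] ι → 𝕜 := LinearMap.id - B.mulVecLin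
  have hf (x : ι → 𝕜) : f x = c ↔ x = B *ᵥ x + c := by
    simp [f, sub_eq_iff_eq_add']
  have hinj : Function.Injective f := by
    rw [← LinearMap.ker_eq_bot, LinearMap.ker_eq_bot']
    intro d hd
    exact h d (sub_eq_zero.mp hd)
  obtain ⟨x, hx⟩ := LinearMap.injective_iff_surjective.mp hinj c
  exact ⟨x, (hf x).mp hx, fun y hy => hinj (((hf y).mpr hy).trans hx.symm)⟩

section LinftyOpNorm

attribute [local instance] Matrix.linftyOpNormedAddCommGroup Matrix.linftyOpNormedRing
  Matrix.linftyOpNormedAlgebra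

theorem Matrix.spectralRadius_lt_one_of_forall_eigenvalue_norm_lt_one {ι : Type*} [Fintype ι]
    [DecidableEq ι] {M : Matrix ι ι ℂ}
    (h : ∀ μ : ℂ, (∃ w : ι → ℂ, w ≠ 0 ∧ M *ᵥ w = μ • w) → ‖μ‖ < 1) :
    spectralRadius ℂ M < 1 := by
  rcases (spectrum ℂ M).eq_empty_or_nonempty with hempty | hne
  · simp [spectralRadius, hempty]
  have hlt : ∀ μ ∈ spectrum ℂ M, ‖μ‖₊ < 1 := by
    intro μ hμ
    rw [← Matrix.spectrum_toLin', ← Module.End.hasEigenvalue_iff_mem_spectrum] at hμ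
    obtain ⟨w, hw⟩ := hμ.exists_hasEigenvector
    have := h μ ⟨w, hw.2, Module.End.mem_eigenspace_iff.mp hw.1⟩
    rw [← NNReal.coe_lt_coe]
    simpa using this
  exact_mod_cast spectrum.spectralRadius_lt_of_forall_lt_of_nonempty hne hlt

theorem summable_norm_pow_of_spectralRadius_lt_one {A : Type*} [NormedRing A]
    [NormedAlgebra ℂ A] [CompleteSpace A] {a : A} (h : spectralRadius ℂ a < 1) :
    Summable fun k => ‖a ^ k‖ := by
  obtain ⟨r, hr, hr1⟩ := ENNReal.lt_iff_exists_nnreal_btwn.mp h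
  refine .of_norm_bounded_eventually_nat
    (summable_geometric_of_lt_one r.coe_nonneg (mod_cast hr1)) ?_
  filter_upwards
    [(spectrum.pow_nnnorm_pow_one_div_tendsto_nhds_spectralRadius a).eventually_lt_const hr,
      eventually_ge_atTop 1] with k hk hk1
  have hk0 : (k : ℝ) ≠ 0 := by positivity
  have := ENNReal.rpow_le_rpow hk.le (z := k) (by positivity)
  rw [← ENNReal.rpow_mul, one_div, inv_mul_cancel₀ hk0, ENNReal.rpow_one,
    ENNReal.rpow_natCast, ← ENNReal.coe_pow, ENNReal.coe_le_coe] at this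
  simpa using (NNReal.coe_le_coe.mpr this)

theorem Matrix.linfty_opNorm_map_ofReal {m n : Type*} [Fintype m] [Fintype n]
    (A : Matrix m n ℝ) : ‖A.map Complex.ofReal‖ = ‖A‖ := by
  simp [linfty_opNorm_def]

theorem Matrix.summable_pow_of_spectralRadius_map_ofReal_lt_one {ι : Type*} [Fintype ι]
    [DecidableEq ι] {A : Matrix ι ι ℝ} (h : spectralRadius ℂ (A.map Complex.ofReal) < 1) :
    Summable fun k => A ^ k := by
  refine .of_norm ?_
  have := summable_norm_pow_of_spectralRadius_lt_one h
  have hpow (k : ℕ) : A.map Complex.ofReal ^ k = (A ^ k).map Complex.ofReal :=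
    (map_pow Complex.ofRealHom.mapMatrix A k).symm
  simpa [hpow, linfty_opNorm_map_ofReal] using this

end LinftyOpNorm

theorem Matrix.exists_one_le_and_mulVec_add_one_eq_of_summable_pow {ι : Type*} [Fintype ι]
    [DecidableEq ι] {A : Matrix ι ι ℝ} (hA : ∀ i j, 0 ≤ A i j)
    (hsum : Summable fun k => A ^ k) :
    ∃ v : ι → ℝ, (∀ i, 1 ≤ v i) ∧ A *ᵥ v + 1 = v := by
  obtain ⟨N, hN⟩ := hsum
  have hNA : 1 + A * N = N := by
    have hshift : HasSum (fun k => A ^ (k + 1)) (N - 1) := by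
      simpa using (hasSum_nat_add_iff' 1).mpr hN
    have hmul : HasSum (fun k => A ^ (k + 1)) (A * N) := by
      simpa only [pow_succ'] using hN.mul_left A
    rw [hmul.unique hshift, add_sub_cancel]
  have hN0 (i j : ι) : 0 ≤ N i j :=
    (Pi.hasSum.mp (Pi.hasSum.mp hN i) j).nonneg fun k => pow_apply_nonneg hA k i j
  have hNv : A *ᵥ (N *ᵥ 1) + 1 = N *ᵥ 1 := by
    conv_rhs => rw [← hNA]
    rw [mulVec_mulVec, add_mulVec, one_mulVec, add_comm]
  have hAv (i : ι) : 0 ≤ (A *ᵥ (N *ᵥ 1)) i :=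
    Finset.sum_nonneg fun j _ =>
      mul_nonneg (hA i j) (Finset.sum_nonneg fun k _ => by simpa using hN0 j k)
  refine ⟨N *ᵥ 1, fun i => ?_, hNv⟩
  rw [← hNv]
  simpa using hAv i

theorem exists_sub_one_le_mul_of_one_le {ι : Type*} [Fintype ι] {v : ι → ℝ}
    (hv : ∀ i, 1 ≤ v i) : ∃ a : ℝ, 0 ≤ a ∧ a < 1 ∧ ∀ i, v i - 1 ≤ a * v i := by
  set T := 1 + ∑ i, v i
  have hvT (i : ι) : v i ≤ T := by
    have := Finset.single_le_sum (fun j _ => zero_le_one.trans (hv j)) (Finset.mem_univ i)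
    linarith
  have hT : 1 ≤ T := by
    have := Finset.sum_nonneg fun j (_ : j ∈ Finset.univ) => zero_le_one.trans (hv j)
    linarith
  have hT0 : 0 < T := zero_lt_one.trans_le hT
  refine ⟨1 - T⁻¹, by linarith [inv_le_one_of_one_le₀ hT], by linarith [inv_pos.mpr hT0],
    fun i => ?_⟩
  have : v i * T⁻¹ ≤ 1 := by
    rw [← div_eq_mul_inv, div_le_one hT0]
    exact hvT i
  nlinarith

theorem Matrix.exists_pos_sum_mul_le_of_summable_pow {ι : Type*} [Fintype ι] [DecidableEq ι]
    {A : Matrix ι ι ℝ} (hA : ∀ i j, 0 ≤ A i j) (hsum : Summable fun k => A ^ k) :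
    ∃ v : ι → ℝ, (∀ i, 0 < v i) ∧
      ∃ a, 0 ≤ a ∧ a < 1 ∧ ∀ i, ∑ j, A i j * v j ≤ a * v i := by
  obtain ⟨v, hv1, hAv⟩ := exists_one_le_and_mulVec_add_one_eq_of_summable_pow hA hsum
  obtain ⟨a, ha0, ha1, ha⟩ := exists_sub_one_le_mul_of_one_le hv1
  refine ⟨v, fun i => zero_lt_one.trans_le (hv1 i), a, ha0, ha1, fun i => ?_⟩
  have := congrFun hAv i
  simp only [Pi.add_apply, Pi.one_apply] at this
  exact (eq_sub_of_add_eq this).trans_le (ha i)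

namespace IsChaoticRelaxation

variable {n : ℕ} {B : Matrix (Fin n) (Fin n) ℝ} {c : Fin n → ℝ} {x : ℕ → Fin n → ℝ}
  {s : Fin n → ℕ → ℕ} {u : ℕ → Fin n} {xs v : Fin n → ℝ} {a K : ℝ}

theorem sub_succ_eq_sum (h : IsChaoticRelaxation B c x s u) (hxs : xs = B *ᵥ xs + c) {j : ℕ}
    (hj : 1 ≤ j) :
    x (j + 1) (u j) - xs (u j) = ∑ α, B (u j) α * (x (j - s α j) α - xs α) := by
  have hxs_u : xs (u j) = ∑ α, B (u j) α * xs α + c (u j) := congrFun hxs (u j)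
  rw [(h.1 j hj (u j)).2 rfl, hxs_u]
  simp only [mul_sub, Finset.sum_sub_distrib]
  ring

theorem abs_sub_succ_le (h : IsChaoticRelaxation B c x s u) (hxs : xs = B *ᵥ xs + c)
    (hBv : ∀ i, ∑ j, |B i j| * v j ≤ a * v i) (hK : 0 ≤ K) {j : ℕ} (hj : 1 ≤ j)
    (hbound : ∀ α, |x (j - s α j) α - xs α| ≤ K * v α) :
    |x (j + 1) (u j) - xs (u j)| ≤ a * K * v (u j) := by
  rw [h.sub_succ_eq_sum hxs hj]
  exact abs_sum_mul_le_of_abs_le hBv hK hbound (u j)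

theorem abs_sub_le_of_abs_sub_one_le (h : IsChaoticRelaxation B c x s u)
    (hxs : xs = B *ᵥ xs + c) (hv : ∀ i, 0 ≤ v i) (ha1 : a ≤ 1)
    (hBv : ∀ i, ∑ j, |B i j| * v j ≤ a * v i) (hK : 0 ≤ K)
    (h1 : ∀ i, |x 1 i - xs i| ≤ K * v i) {j : ℕ} (hj : 1 ≤ j) (i : Fin n) :
    |x j i - xs i| ≤ K * v i := by
  induction j using Nat.strong_induction_on generalizing i with
  | _ j ih =>
    obtain rfl | hj2 := hj.eq_or_lt
    · exact h1 i
    obtain ⟨m, rfl⟩ : ∃ m, j = m + 1 := ⟨j - 1, by omega⟩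
    have hm : 1 ≤ m := by omega
    obtain ⟨shat, hs⟩ := h.2.1
    by_cases hi : i = u m
    · subst hi
      refine (h.abs_sub_succ_le hxs hBv hK hm fun α => ?_).trans ?_
      · have := hs α m hm
        exact ih _ (by omega) (by omega) α
      · exact mul_le_mul_of_nonneg_right (mul_le_of_le_one_left hK ha1) (hv _)
    · rw [(h.1 m hm i).1 hi]
      exact ih m (by omega) hm i

theorem eventually_abs_sub_le_mul (h : IsChaoticRelaxation B c x s u)
    (hxs : xs = B *ᵥ xs + c) (hBv : ∀ i, ∑ j, |B i j| * v j ≤ a * v i) (hK : 0 ≤ K)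
    (hev : ∀ᶠ j in atTop, ∀ α, |x j α - xs α| ≤ K * v α) (i : Fin n) :
    ∀ᶠ j in atTop, |x j i - xs i| ≤ a * K * v i := by
  obtain ⟨shat, hs⟩ := h.2.1
  obtain ⟨J, hJ⟩ := eventually_atTop.mp (hev.and (eventually_ge_atTop 1))
  have hJ1 := (hJ J le_rfl).2
  obtain ⟨L, hL, rfl⟩ := h.2.2 i (J + shat) (by omega)
  have hupdate (t : ℕ) (ht : L ≤ t) : |x (t + 1) (u t) - xs (u t)| ≤ a * K * v (u t) :=
    h.abs_sub_succ_le hxs hBv hK (by omega) fun α => by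
      have := hs α t (by omega)
      exact (hJ _ (by omega)).1 α
  refine eventually_atTop.mpr ⟨L + 1, fun j hj => ?_⟩
  induction j, hj using Nat.le_induction with
  | base => exact hupdate L le_rfl
  | succ j hj ih =>
    by_cases hi : u L = u j
    · rw [hi]
      exact hupdate j (by omega)
    · rw [(h.1 j (by omega) (u L)).1 hi]
      exact ih

theorem tendsto (h : IsChaoticRelaxation B c x s u) (hxs : xs = B *ᵥ xs + c)
    (hv : ∀ i, 0 < v i) (ha0 : 0 ≤ a) (ha1 : a < 1)
    (hBv : ∀ i, ∑ j, |B i j| * v j ≤ a * v i) : Tendsto x atTop (𝓝 xs) := by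
  obtain ⟨K, hK, h1⟩ := exists_abs_le_mul_of_pos hv (x 1 - xs)
  have hpow (m : ℕ) : ∀ᶠ j in atTop, ∀ i, |x j i - xs i| ≤ a ^ m * K * v i := by
    induction m with
    | zero =>
      simpa using eventually_atTop.mpr ⟨1, fun j hj =>
        h.abs_sub_le_of_abs_sub_one_le hxs (fun i => (hv i).le) ha1.le hBv hK h1 hj⟩
    | succ m ih =>
      simpa only [pow_succ', mul_assoc] using
        eventually_all.mpr (h.eventually_abs_sub_le_mul hxs hBv (by positivity) ih)
  refine tendsto_pi_nhds.mpr fun i => tendsto_sub_nhds_zero_iff.mp ?_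
  exact tendsto_zero_of_forall_eventually_abs_le_pow_mul ha0 ha1 (K := K * v i) fun m =>
    (hpow m).mono fun j hj => by simpa only [mul_assoc] using hj i

end IsChaoticRelaxation

theorem chaotic_relaxation_converges_of_spectral_radius_lt_one_general
    {n : ℕ} (B : Matrix (Fin n) (Fin n) ℝ) (c : Fin n → ℝ)
    (hspec : ∀ μ : ℂ,
      (∃ w : Fin n → ℂ, w ≠ 0 ∧
        (B.map (fun t : ℝ => ((|t| : ℝ) : ℂ))).mulVec w = μ • w) →
      ‖μ‖ < 1) :
    (∃ (v : Fin n → ℝ) (a : ℝ), (∀ i, 0 < v i) ∧ a < 1 ∧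
        ∀ i, (∑ j : Fin n, |B i j| * v j) ≤ a * v i) ∧
    (∃! xs : Fin n → ℝ, xs = B.mulVec xs + c) ∧
    ∀ xs : Fin n → ℝ, xs = B.mulVec xs + c →
      ∀ (x : ℕ → Fin n → ℝ) (s : Fin n → ℕ → ℕ) (u : ℕ → Fin n),
        IsChaoticRelaxation B c x s u →
        Tendsto x atTop (𝓝 xs) := by
  have hrad : spectralRadius ℂ ((B.map fun t => |t|).map Complex.ofReal) < 1 :=
    spectralRadius_lt_one_of_forall_eigenvalue_norm_lt_one hspec
  obtain ⟨v, hv, a, ha0, ha1, hBv⟩ := exists_pos_sum_mul_le_of_summable_pow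
    (fun i j => abs_nonneg (B i j)) (summable_pow_of_spectralRadius_map_ofReal_lt_one hrad)
  refine ⟨⟨v, a, hv, ha1, hBv⟩, existsUnique_eq_mulVec_add
    (fun d hd => eq_zero_of_eq_mulVec hv ha0 ha1 hBv hd) c, ?_⟩
  exact fun xs hxs x s u h => h.tendsto hxs hv ha0 ha1 hBv

/-- If every complex eigenvalue of the entrywise absolute-value matrix `|B|` has modulus
strictly less than 1 (i.e. the spectral radius of `|B|` is `< 1`), then there are `v > 0`
and `α < 1` with `|B| v ≤ α v` componentwise; consequently `x = B x + c` has a unique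
solution and every chaotic relaxation for `(B, c)` converges to it. -/
theorem chaotic_relaxation_converges_of_spectral_radius_lt_one
    {n : ℕ} (hn : 1 ≤ n) (B : Matrix (Fin n) (Fin n) ℝ) (c : Fin n → ℝ)
    (hspec : ∀ μ : ℂ,
      (∃ w : Fin n → ℂ, w ≠ 0 ∧
        (B.map (fun t : ℝ => ((|t| : ℝ) : ℂ))).mulVec w = μ • w) →
      ‖μ‖ < 1) :
    (∃ (v : Fin n → ℝ) (a : ℝ), (∀ i, 0 < v i) ∧ a < 1 ∧
        ∀ i, (∑ j : Fin n, |B i j| * v j) ≤ a * v i) ∧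
    (∃! xs : Fin n → ℝ, xs = B.mulVec xs + c) ∧
    ∀ xs : Fin n → ℝ, xs = B.mulVec xs + c →
      ∀ (x : ℕ → Fin n → ℝ) (s : Fin n → ℕ → ℕ) (u : ℕ → Fin n),
        IsChaoticRelaxation B c x s u →
        Tendsto x atTop (𝓝 xs) :=
  chaotic_relaxation_converges_of_spectral_radius_lt_one_general B c hspec
end

section
/- For every x ∈ D_B, every complex eigenvalue of the Jacobian matrix h′(x) ∈ ℝ^{m×m} equals zero; in particular, the spectral radius of the entrywise absolute-value matrix |h′(x)| is zero. -/
open Filter Topology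

/-- The state space of block unknowns: one `b × b` block for each index pair in `S`. -/
abbrev BlockVec (b N : ℕ) (S : Finset (Fin N × Fin N)) : Type :=
  {p : Fin N × Fin N // p ∈ S} → Fin b → Fin b → ℝ

/-- The block `X_{ij}` of the family `x`, with the convention `X_{ij} = 0` for
`(i,j) ∉ S`. -/
def Xf {b N : ℕ} (S : Finset (Fin N × Fin N)) (x : BlockVec b N S) (i j : Fin N) :
    Matrix (Fin b) (Fin b) ℝ :=
  if h : (i, j) ∈ S then Matrix.of (x ⟨(i, j), h⟩) else 0

/-- The block `H_{ij}(x)` of the block-ILU fixed point map: for `i > j` it is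
`(A_{ij} - ∑_{k<j} X_{ik} X_{kj}) X_{jj}⁻¹`, and for `i ≤ j` it is
`A_{ij} - ∑_{k<i} X_{ik} X_{kj}`. -/
noncomputable def Hmap {b N : ℕ} (S : Finset (Fin N × Fin N))
    (A : Fin N → Fin N → Matrix (Fin b) (Fin b) ℝ) (x : BlockVec b N S) (i j : Fin N) :
    Matrix (Fin b) (Fin b) ℝ :=
  if j < i then
    (A i j - ∑ k ∈ Finset.univ.filter (fun k : Fin N => k < j),
        Xf S x i k * Xf S x k j) * (Xf S x j j)⁻¹
  else
    A i j - ∑ k ∈ Finset.univ.filter (fun k : Fin N => k < i), Xf S x i k * Xf S x k j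

/-- The block-ILU fixed point map `h`. -/
noncomputable def hFun {b N : ℕ} (S : Finset (Fin N × Fin N))
    (A : Fin N → Fin N → Matrix (Fin b) (Fin b) ℝ) :
    BlockVec b N S → BlockVec b N S :=
  fun x p k l => Hmap S A x p.1.1 p.1.2 k l

/-- The domain of definition `D_B`: all diagonal blocks invertible. -/
def DB (b N : ℕ) (S : Finset (Fin N × Fin N)) : Set (BlockVec b N S) :=
  {x | ∀ j : Fin N, IsUnit (Xf S x j j)}

/-! The Jacobian `h'(x)` is strictly lower triangular for the row-major order of the blocks:
`H_{ij}` reads only blocks `X_{pq}` with `(p, q) ≺ (i, j)`, so its partial derivatives along every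
block `(p, q) ⪰ (i, j)` vanish. For such a matrix, and equally for its entrywise absolute value,
an eigenvector evaluated at a coordinate of least rank in its support gives `μ • w a = 0`. -/

section LineDerivative

variable {𝕜 E F : Type*} [NontriviallyNormedField 𝕜] [NormedAddCommGroup E]
  [NormedSpace 𝕜 E] [NormedAddCommGroup F] [NormedSpace 𝕜 F]

-- If `f` is not differentiable at `x`, the conclusion holds by the junk value `fderiv = 0`.
lemma fderiv_apply_eq_zero_of_forall_add_smul_eq {f : E → F} {x v : E}
    (h : ∀ t : 𝕜, f (x + t • v) = f x) : fderiv 𝕜 f x v = 0 := by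
  by_cases hf : DifferentiableAt 𝕜 f x
  · rw [← hf.lineDeriv_eq_fderiv, lineDeriv, funext h, deriv_const]
  · simp [fderiv_zero_of_not_differentiableAt hf]

end LineDerivative

lemma eq_zero_of_mulVec_eq_smul_of_lower_triangular {ι α R : Type*} [Fintype ι] [LinearOrder α]
    [CommRing R] [NoZeroDivisors R] {M : Matrix ι ι R} (rank : ι → α)
    (hM : ∀ a c, ¬ rank c < rank a → M a c = 0) {μ : R}
    (hμ : ∃ w : ι → R, w ≠ 0 ∧ M.mulVec w = μ • w) : μ = 0 := by
  classical
  obtain ⟨w, hw, hMw⟩ := hμ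
  have hsupp : (Finset.univ.filter fun a => w a ≠ 0).Nonempty := by
    obtain ⟨a, ha⟩ := Function.ne_iff.mp hw
    exact ⟨a, by simpa using ha⟩
  -- At a coordinate of least rank in the support of `w`, the row of `M` meets only zeros of `w`.
  obtain ⟨a, ha, hmin⟩ := Finset.exists_min_image _ rank hsupp
  have hrow : M.mulVec w a = 0 := by
    refine Finset.sum_eq_zero fun c _ => ?_
    by_cases hwc : w c = 0
    · simp [hwc]
    · simp [hM a c (not_lt.mpr (hmin c (by simpa using hwc)))]
  have hμa : μ * w a = 0 := by simpa [hrow] using (congrFun hMw a).symm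
  exact (mul_eq_zero.mp hμa).resolve_right (by simpa using ha)

section BlockILU

variable {b N : ℕ} (S : Finset (Fin N × Fin N))

lemma Xf_congr {x y : BlockVec b N S} {p q : Fin N}
    (h : ∀ hpq : (p, q) ∈ S, x ⟨(p, q), hpq⟩ = y ⟨(p, q), hpq⟩) :
    Xf S x p q = Xf S y p q := by
  unfold Xf
  split_ifs with hpq
  · rw [h hpq]
  · rfl

lemma Xf_add_smul_single_of_ne (x : BlockVec b N S) (c : {p : Fin N × Fin N // p ∈ S})
    (v : Fin b → Fin b → ℝ) (t : ℝ) {p q : Fin N} (hc : c.1 ≠ (p, q)) :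
    Xf S (x + t • (Pi.single c v : BlockVec b N S)) p q = Xf S x p q :=
  Xf_congr S fun hpq => by
    rw [Pi.add_apply, Pi.smul_apply, Pi.single_eq_of_ne (fun h => hc (by rw [← h])),
      smul_zero, add_zero]

lemma Hmap_congr_of_lex_lt (A : Fin N → Fin N → Matrix (Fin b) (Fin b) ℝ)
    {x y : BlockVec b N S} {i j : Fin N}
    (h : ∀ p q, toLex (p, q) < toLex (i, j) → Xf S x p q = Xf S y p q) :
    Hmap S A x i j = Hmap S A y i j := by
  have hrow : ∀ {p} q, p < i → Xf S x p q = Xf S y p q :=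
    fun q hp => h _ q (Prod.Lex.toLex_lt_toLex.mpr (Or.inl hp))
  have hcol : ∀ {q}, q < j → Xf S x i q = Xf S y i q :=
    fun hq => h i _ (Prod.Lex.toLex_lt_toLex.mpr (Or.inr ⟨rfl, hq⟩))
  unfold Hmap
  split_ifs with hji
  · have hsum : ∀ k ∈ Finset.univ.filter (· < j),
        Xf S x i k * Xf S x k j = Xf S y i k * Xf S y k j :=
      fun k hk => by
        have hkj : k < j := (Finset.mem_filter.mp hk).2
        rw [hcol hkj, hrow j (hkj.trans hji)]
    rw [Finset.sum_congr rfl hsum, hrow j hji]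
  · have hsum : ∀ k ∈ Finset.univ.filter (· < i),
        Xf S x i k * Xf S x k j = Xf S y i k * Xf S y k j :=
      fun k hk => by
        have hki : k < i := (Finset.mem_filter.mp hk).2
        rw [hcol (hki.trans_le (not_lt.mp hji)), hrow j hki]
    rw [Finset.sum_congr rfl hsum]

lemma fderiv_hFun_apply_single_eq_zero (A : Fin N → Fin N → Matrix (Fin b) (Fin b) ℝ)
    (x : BlockVec b N S) (a c : {p : Fin N × Fin N // p ∈ S})
    (hac : ¬ toLex c.1 < toLex a.1) (v : Fin b → Fin b → ℝ) (k l : Fin b) :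
    fderiv ℝ (fun y : BlockVec b N S => hFun S A y a k l) x
      (Pi.single c v : BlockVec b N S) = 0 :=
  fderiv_apply_eq_zero_of_forall_add_smul_eq fun t => by
    have hblocks : ∀ p q, toLex (p, q) < toLex a.1 →
        Xf S (x + t • (Pi.single c v : BlockVec b N S)) p q = Xf S x p q :=
      fun p q hpq => Xf_add_smul_single_of_ne S x c v t fun hc => hac (hc ▸ hpq)
    simp only [hFun, Hmap_congr_of_lex_lt S A hblocks]

end BlockILU

theorem hFun_jacobian_eigenvalues_zero_general
    {b N : ℕ} (S : Finset (Fin N × Fin N))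
    (A : Fin N → Fin N → Matrix (Fin b) (Fin b) ℝ) :
    ∀ x ∈ DB b N S,
      (∀ μ : ℂ,
        (∃ w : ({p : Fin N × Fin N // p ∈ S} × Fin b × Fin b) → ℂ, w ≠ 0 ∧
          (Matrix.of (fun a c : {p : Fin N × Fin N // p ∈ S} × Fin b × Fin b =>
            ((fderiv ℝ (fun y : BlockVec b N S => hFun S A y a.1 a.2.1 a.2.2) x
              (Pi.single c.1 (Pi.single c.2.1 (Pi.single c.2.2 (1 : ℝ)))) : ℝ)
                : ℂ))).mulVec w = μ • w) →
        μ = 0) ∧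
      (∀ μ : ℂ,
        (∃ w : ({p : Fin N × Fin N // p ∈ S} × Fin b × Fin b) → ℂ, w ≠ 0 ∧
          (Matrix.of (fun a c : {p : Fin N × Fin N // p ∈ S} × Fin b × Fin b =>
            ((|fderiv ℝ (fun y : BlockVec b N S => hFun S A y a.1 a.2.1 a.2.2) x
              (Pi.single c.1 (Pi.single c.2.1 (Pi.single c.2.2 (1 : ℝ))))| : ℝ)
                : ℂ))).mulVec w = μ • w) →
        μ = 0) := by
  intro x _
  have hzero : ∀ a c : {p : Fin N × Fin N // p ∈ S} × Fin b × Fin b,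
      ¬ toLex c.1.1 < toLex a.1.1 →
      fderiv ℝ (fun y : BlockVec b N S => hFun S A y a.1 a.2.1 a.2.2) x
        (Pi.single c.1 (Pi.single c.2.1 (Pi.single c.2.2 (1 : ℝ)))) = 0 :=
    fun a c hac => fderiv_hFun_apply_single_eq_zero S A x a.1 c.1 hac _ _ _
  refine ⟨fun μ => eq_zero_of_mulVec_eq_smul_of_lower_triangular (fun a => toLex a.1.1) ?_,
    fun μ => eq_zero_of_mulVec_eq_smul_of_lower_triangular (fun a => toLex a.1.1) ?_⟩ <;>
  · intro a c hac
    simp [hzero a c hac]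

/-- At every `x ∈ D_B`, every complex eigenvalue of the Jacobian matrix `h'(x)` equals
zero; in particular, every complex eigenvalue of the entrywise absolute-value matrix
`|h'(x)|` equals zero, i.e. the spectral radius of `|h'(x)|` is zero. -/
theorem hFun_jacobian_eigenvalues_zero
    {b N : ℕ} (hb : 1 ≤ b) (hN : 1 ≤ N) (S : Finset (Fin N × Fin N))
    (hS : ∀ j : Fin N, (j, j) ∈ S)
    (A : Fin N → Fin N → Matrix (Fin b) (Fin b) ℝ) :
    ∀ x ∈ DB b N S,
      (∀ μ : ℂ,
        (∃ w : ({p : Fin N × Fin N // p ∈ S} × Fin b × Fin b) → ℂ, w ≠ 0 ∧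
          (Matrix.of (fun a c : {p : Fin N × Fin N // p ∈ S} × Fin b × Fin b =>
            ((fderiv ℝ (fun y : BlockVec b N S => hFun S A y a.1 a.2.1 a.2.2) x
              (Pi.single c.1 (Pi.single c.2.1 (Pi.single c.2.2 (1 : ℝ)))) : ℝ)
                : ℂ))).mulVec w = μ • w) →
        μ = 0) ∧
      (∀ μ : ℂ,
        (∃ w : ({p : Fin N × Fin N // p ∈ S} × Fin b × Fin b) → ℂ, w ≠ 0 ∧
          (Matrix.of (fun a c : {p : Fin N × Fin N // p ∈ S} × Fin b × Fin b =>
            ((|fderiv ℝ (fun y : BlockVec b N S => hFun S A y a.1 a.2.1 a.2.2) x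
              (Pi.single c.1 (Pi.single c.2.1 (Pi.single c.2.2 (1 : ℝ))))| : ℝ)
                : ℂ))).mulVec w = μ • w) →
        μ = 0) :=
  hFun_jacobian_eigenvalues_zero_general S A
end
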